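/- Let d ≥ 1 be an integer and z a complex number with Im z > 0. Then the following are equivalent: (1) there exist real numbers a_0, …, a_d with a_m ≥ 0 for all m, not all zero, such that Σ_{m=0}^d a_m · C_d(z+d−m) = 0; (2) A(0,d;z) ≥ π, i.e., Σ_{m=0}^{d−1} (arg(z−m) − arg(z+d−m)) ≥ π. -/

import Mathlib

/-- The binomial coefficient polynomial `C_d(w) = (1/d!) ∏_{i=0}^{d-1} (w - i)`. -/
noncomputable def binomC (d : ℕ) (w : ℂ) : ℂ :=
  (∏ i ∈ Finset.range d, (w - i)) / (Nat.factorial d)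

/-- The angle sum `A(j,k;z) = Σ_{m=j}^{k-1} (arg(z-m) - arg(z+d-m))`. -/
noncomputable def angleSum (d j k : ℕ) (z : ℂ) : ℝ :=
  ∑ m ∈ Finset.Icc j (k - 1), (Complex.arg (z - m) - Complex.arg (z + d - m))

/-!
Put `q j = (z - j) / (z + d - j)`. Consecutive basis values satisfy `b_{j+1}(z) = q j * b_j(z)`,
so `b_m(z)` is `b_0(z) ≠ 0` times the partial product `q 0 ⋯ q (m-1)`. Each `q j` lies in the
upper half-plane with `arg (q j) = arg (z - j) - arg (z + d - j)`, so the partial products turn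
counterclockwise by these angles, and the angle sum `A(0,d;z)` is their total turn.
If the total turn is `< π`, all partial products lie in one open half-plane and no nontrivial
nonnegative combination of them vanishes. If it is `≥ π`, let `k + 1` be the first step at which
the turn reaches `π`; the partial products of indices `0`, `k`, `k + 1` then have directions
`0 ≤ θ₁ < π ≤ θ₂ < 2π` and span `0` nonnegatively by the identity
`sin (c - b) e^{ia} + sin (a - c) e^{ib} + sin (b - a) e^{ic} = 0`.
-/

open Complex Finset
open scoped Real

namespace Complex

theorem sin_sub_mul_exp_add_sin_sub_mul_exp_add_sin_sub_mul_exp (a b c : ℝ) :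
    (Real.sin (c - b) : ℂ) * exp (a * I) + Real.sin (a - c) * exp (b * I)
      + Real.sin (b - a) * exp (c * I) = 0 := by
  simp only [ofReal_sin, ofReal_sub, exp_mul_I, Complex.sin_sub]
  ring

theorem arg_div_of_im_pos {u v : ℂ} (hu : 0 < u.im) (hv : 0 < v.im) :
    arg (u / v) = arg u - arg v := by
  have hu₀ : u ≠ 0 := fun h => by simp [h] at hu
  have hv₀ : v ≠ 0 := fun h => by simp [h] at hv
  have hu₁ := arg_nonneg_iff.2 hu.le
  have hv₁ := arg_nonneg_iff.2 hv.le
  have hu₂ := arg_lt_pi_iff.2 (Or.inr hu.ne')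
  have hv₂ := arg_lt_pi_iff.2 (Or.inr hv.ne')
  have hinv : arg v⁻¹ = -arg v := by rw [arg_inv, if_neg hv₂.ne]
  rw [div_eq_mul_inv, arg_mul hu₀ (inv_ne_zero hv₀) (by rw [hinv]; constructor <;> linarith),
    hinv, sub_eq_add_neg]

theorem im_div_pos_of_re_lt {u v : ℂ} (him : u.im = v.im) (hv : 0 < v.im)
    (hre : u.re < v.re) : 0 < (u / v).im := by
  have hv₀ : 0 < normSq v := normSq_pos.2 fun h => by simp [h] at hv
  have him_div : (u / v).im = v.im * (v.re - u.re) / normSq v := by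
    rw [div_im, him]
    ring
  rw [him_div]
  exact div_pos (mul_pos hv (sub_pos.2 hre)) hv₀

theorem prod_eq_ofReal_prod_norm_mul_exp_sum_arg {ι : Type*} (s : Finset ι) (q : ι → ℂ) :
    ∏ j ∈ s, q j = (∏ j ∈ s, ‖q j‖ : ℝ) * exp ((∑ j ∈ s, arg (q j) : ℝ) * I) := by
  conv_lhs => rw [← prod_congr rfl fun j _ => norm_mul_exp_arg_mul_I (q j)]
  rw [prod_mul_distrib, ofReal_prod, ofReal_sum, sum_mul, exp_sum]

end Complex

theorem exists_nonneg_sum_eq_zero_of_three {ι : Type*} [Fintype ι] [DecidableEq ι] (w : ι → ℂ)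
    {i j k : ι} {a b c : ℝ} (ha : 0 < a) (hb : 0 ≤ b) (hc : 0 ≤ c)
    (h : a * w i + b * w j + c * w k = 0) :
    ∃ x : ι → ℝ, (∀ m, 0 ≤ x m) ∧ (∃ m, x m ≠ 0) ∧ ∑ m, (x m : ℂ) * w m = 0 := by
  set y : ι → ℝ := fun m => (if m = j then b else 0) + if m = k then c else 0
  have hy : ∀ m, 0 ≤ y m := fun m => by dsimp only [y]; split_ifs <;> linarith
  refine ⟨fun m => (if m = i then a else 0) + y m, fun m => ?_, ⟨i, ?_⟩, ?_⟩
  · dsimp only; split_ifs <;> linarith [hy m]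
  · simpa using (add_pos_of_pos_of_nonneg ha (hy i)).ne'
  · simp only [y, ofReal_add, add_mul, sum_add_distrib, apply_ite ((↑) : ℝ → ℂ), ite_mul,
      ofReal_zero, zero_mul, sum_ite_eq', mem_univ, if_true]
    rw [← h, add_assoc]

theorem sum_ofReal_mul_exp_ne_zero {ι : Type*} [Fintype ι] {c θ : ι → ℝ} (φ : ℝ)
    (hc : ∀ i, 0 ≤ c i) (hc₀ : ∃ i, c i ≠ 0) (hθ : ∀ i, |θ i - φ| < π / 2) :
    ∑ i, (c i : ℂ) * exp (θ i * I) ≠ 0 := by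
  intro h
  have hre : (∑ i, (c i : ℂ) * exp (θ i * I) * exp (-φ * I)).re
      = ∑ i, c i * Real.cos (θ i - φ) := by
    rw [re_sum]
    refine sum_congr rfl fun i _ => ?_
    rw [mul_assoc, ← exp_add, ← add_mul, ← sub_eq_add_neg, ← ofReal_sub, re_ofReal_mul,
      exp_ofReal_mul_I_re]
  have hpos : 0 < ∑ i, c i * Real.cos (θ i - φ) := by
    obtain ⟨i₀, hi₀⟩ := hc₀
    have hcos : ∀ i, 0 < Real.cos (θ i - φ) := fun i =>
      Real.cos_pos_of_mem_Ioo (abs_lt.1 (hθ i))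
    exact sum_pos' (fun i _ => mul_nonneg (hc i) (hcos i).le)
      ⟨i₀, mem_univ _, mul_pos ((hc i₀).lt_of_ne' hi₀) (hcos i₀)⟩
  rw [← sum_mul, h, zero_mul, zero_re] at hre
  linarith

theorem exists_map_lt_le_map_succ {α : Type*} [LinearOrder α] {f : ℕ → α} {c : α} {n : ℕ}
    (h₀ : f 0 < c) (hn : c ≤ f n) : ∃ k < n, f k < c ∧ c ≤ f (k + 1) := by
  have hex : ∃ k, c ≤ f k := ⟨n, hn⟩
  have hle : Nat.find hex ≤ n := Nat.find_min' hex hn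
  obtain ⟨k, hk⟩ : ∃ k, Nat.find hex = k + 1 :=
    Nat.exists_eq_succ_of_ne_zero fun h => (Nat.find_spec hex).not_gt (h ▸ h₀)
  exact ⟨k, by omega, lt_of_not_ge (Nat.find_min hex (by omega)), hk ▸ Nat.find_spec hex⟩

section PartialProducts

variable {n : ℕ} {q : ℕ → ℂ}

theorem sum_prod_ne_zero_of_sum_arg_lt_pi (hq : ∀ j < n, 0 < (q j).im)
    (hlt : ∑ j ∈ range n, arg (q j) < π) {a : Fin (n + 1) → ℝ} (ha : ∀ m, 0 ≤ a m)
    (ha₀ : ∃ m, a m ≠ 0) : ∑ m : Fin (n + 1), (a m : ℂ) * ∏ j ∈ range m, q j ≠ 0 := by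
  set θ : ℕ → ℝ := fun m => ∑ j ∈ range m, arg (q j)
  set ρ : ℕ → ℝ := fun m => ∏ j ∈ range m, ‖q j‖
  have hρ : ∀ m : Fin (n + 1), 0 < ρ m := fun m => prod_pos fun j hj =>
    norm_pos_iff.2 fun h0 => by simpa [h0] using hq j (by simp at hj; omega)
  have hθ : ∀ m : Fin (n + 1), 0 ≤ θ m ∧ θ m ≤ θ n := fun m =>
    have harg : ∀ j ∈ range n, 0 ≤ arg (q j) := fun j hj =>
      arg_nonneg_iff.2 (hq j (mem_range.1 hj)).le
    ⟨sum_nonneg fun j hj => harg j (range_subset_range.2 m.is_le hj),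
      sum_le_sum_of_subset_of_nonneg (range_subset_range.2 m.is_le) fun j hj _ => harg j hj⟩
  have hpolar : ∀ m : Fin (n + 1), (a m : ℂ) * ∏ j ∈ range m, q j
      = ((a m * ρ m : ℝ) : ℂ) * exp (θ m * I) := fun m => by
    rw [prod_eq_ofReal_prod_norm_mul_exp_sum_arg, ofReal_mul, mul_assoc]
  rw [sum_congr rfl fun m _ => hpolar m]
  refine sum_ofReal_mul_exp_ne_zero (θ n / 2) (fun m => mul_nonneg (ha m) (hρ m).le) ?_
    fun m => abs_lt.2 ⟨by linarith [hθ m], by linarith [hθ m]⟩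
  obtain ⟨m, hm⟩ := ha₀
  exact ⟨m, mul_ne_zero hm (hρ m).ne'⟩

theorem exists_nonneg_sum_prod_eq_zero_of_pi_le_sum_arg (hq : ∀ j < n, 0 < (q j).im)
    (hle : π ≤ ∑ j ∈ range n, arg (q j)) :
    ∃ a : Fin (n + 1) → ℝ, (∀ m, 0 ≤ a m) ∧ (∃ m, a m ≠ 0) ∧
      ∑ m : Fin (n + 1), (a m : ℂ) * ∏ j ∈ range m, q j = 0 := by
  set θ : ℕ → ℝ := fun m => ∑ j ∈ range m, arg (q j)
  set ρ : ℕ → ℝ := fun m => ∏ j ∈ range m, ‖q j‖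
  obtain ⟨k, hkn, hθk, hθk₁⟩ :=
    exists_map_lt_le_map_succ (f := θ) (by simpa [θ] using Real.pi_pos) hle
  have hθsucc : θ (k + 1) = θ k + arg (q k) := sum_range_succ _ _
  have hρ : ∀ m ≤ k + 1, ρ m ≠ 0 := fun m hm => prod_ne_zero_iff.2 fun j hj =>
    norm_ne_zero_iff.2 fun h0 => by simpa [h0] using hq j (by simp at hj; omega)
  have hθk₀ : 0 ≤ θ k := sum_nonneg fun j hj => arg_nonneg_iff.2 (hq j (by simp at hj; omega)).le
  have hpolar : ∀ m, ∏ j ∈ range m, q j = ρ m * exp (θ m * I) := fun m =>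
    prod_eq_ofReal_prod_norm_mul_exp_sum_arg _ _
  have key := sin_sub_mul_exp_add_sin_sub_mul_exp_add_sin_sub_mul_exp 0 (θ k) (θ (k + 1))
  refine exists_nonneg_sum_eq_zero_of_three (fun m : Fin (n + 1) => ∏ j ∈ range m, q j)
    (i := 0) (j := ⟨k, by omega⟩) (k := ⟨k + 1, by omega⟩)
    (a := Real.sin (θ (k + 1) - θ k)) (b := Real.sin (0 - θ (k + 1)) / ρ k)
    (c := Real.sin (θ k - 0) / ρ (k + 1)) ?_ ?_ ?_ ?_
  · rw [hθsucc, add_sub_cancel_left, sin_arg]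
    exact div_pos (hq k hkn) (norm_pos_iff.2 fun h0 => by simpa [h0] using hq k hkn)
  · refine div_nonneg ?_ (prod_nonneg fun _ _ => norm_nonneg _)
    rw [← Real.sin_add_two_pi]
    exact Real.sin_nonneg_of_nonneg_of_le_pi (by linarith [arg_le_pi (q k)]) (by linarith)
  · exact div_nonneg (by simpa using Real.sin_nonneg_of_nonneg_of_le_pi hθk₀ hθk.le)
      (prod_nonneg fun _ _ => norm_nonneg _)
  · have hρk : (ρ k : ℂ) ≠ 0 := ofReal_ne_zero.2 (hρ k (by omega))
    have hρk₁ : (ρ (k + 1) : ℂ) ≠ 0 := ofReal_ne_zero.2 (hρ (k + 1) le_rfl)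
    rw [Fin.val_zero, prod_range_zero, hpolar, hpolar, ofReal_div, ofReal_div, ← mul_assoc,
      ← mul_assoc, div_mul_cancel₀ _ hρk, div_mul_cancel₀ _ hρk₁, mul_one]
    simpa only [ofReal_zero, zero_mul, exp_zero, mul_one] using key

theorem exists_nonneg_sum_prod_eq_zero_iff (hq : ∀ j < n, 0 < (q j).im) :
    (∃ a : Fin (n + 1) → ℝ, (∀ m, 0 ≤ a m) ∧ (∃ m, a m ≠ 0) ∧
      ∑ m : Fin (n + 1), (a m : ℂ) * ∏ j ∈ range m, q j = 0) ↔
      π ≤ ∑ j ∈ range n, arg (q j) := by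
  refine ⟨fun ⟨a, ha, ha₀, h⟩ => ?_, exists_nonneg_sum_prod_eq_zero_of_pi_le_sum_arg hq⟩
  by_contra hlt
  exact sum_prod_ne_zero_of_sum_arg_lt_pi hq (not_le.1 hlt) ha ha₀ h

end PartialProducts

theorem binomC_sub_one_mul (d : ℕ) (w : ℂ) : binomC d (w - 1) * w = binomC d w * (w - d) := by
  have h := (prod_range_succ' (fun i : ℕ => w - i) d).symm.trans
    (prod_range_succ (fun i : ℕ => w - i) d)
  simp only [Nat.cast_add, Nat.cast_one, Nat.cast_zero, sub_zero, ← sub_sub] at h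
  simp only [binomC, div_mul_eq_mul_div, ← h, sub_right_comm w 1]

theorem binomC_ne_zero {d : ℕ} {w : ℂ} (hw : w.im ≠ 0) : binomC d w ≠ 0 :=
  div_ne_zero (prod_ne_zero_iff.2 fun i _ h => hw (by simpa using congrArg im h))
    (Nat.cast_ne_zero.2 d.factorial_ne_zero)

theorem binomC_add_sub_natCast {d : ℕ} {z : ℂ} (hz : z.im ≠ 0) (m : ℕ) :
    binomC d (z + d - m) = binomC d (z + d) * ∏ j ∈ range m, (z - j) / (z + d - j) := by
  induction m with
  | zero => simp
  | succ m ih =>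
    have hw : z + d - m ≠ 0 := fun h => hz (by simpa using congrArg im h)
    have h := binomC_sub_one_mul d (z + d - m)
    rw [show z + d - m - d = z - m by ring, ← eq_div_iff hw, mul_div_assoc] at h
    rw [Nat.cast_succ, ← sub_sub, h, ih, prod_range_succ, mul_assoc]

theorem angleSum_zero_self (d : ℕ) (z : ℂ) :
    angleSum d 0 d z = ∑ j ∈ range d, (arg (z - j) - arg (z + d - j)) := by
  rcases d.eq_zero_or_pos with rfl | hd
  · simp [angleSum]
  · rw [angleSum, Nat.range_eq_Icc_zero_sub_one d hd.ne']

theorem stmt_16_general (d : ℕ) (z : ℂ) (hz : 0 < z.im) :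
    (∃ a : Fin (d + 1) → ℝ, (∀ m, 0 ≤ a m) ∧ (∃ m, a m ≠ 0) ∧
        ∑ m, (a m : ℂ) * binomC d (z + d - (m : ℕ)) = 0)
      ↔ Real.pi ≤ angleSum d 0 d z := by
  set q : ℕ → ℂ := fun j => (z - j) / (z + d - j)
  have hq : ∀ j < d, 0 < (q j).im := fun j hj =>
    im_div_pos_of_re_lt (by simp) (by simpa using hz) (by simp; omega)
  have hsum : ∀ a : Fin (d + 1) → ℝ, ∑ m, (a m : ℂ) * binomC d (z + d - (m : ℕ))
      = binomC d (z + d) * ∑ m : Fin (d + 1), (a m : ℂ) * ∏ j ∈ range m, q j := fun a => by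
    simp only [binomC_add_sub_natCast hz.ne', mul_sum]
    exact sum_congr rfl fun m _ => mul_left_comm _ _ _
  have harg : ∀ j : ℕ, arg (q j) = arg (z - j) - arg (z + d - j) := fun j =>
    arg_div_of_im_pos (by simpa using hz) (by simpa using hz)
  rw [angleSum_zero_self, sum_congr rfl fun j _ => (harg j).symm,
    ← exists_nonneg_sum_prod_eq_zero_iff hq]
  have hB : binomC d (z + d) ≠ 0 := binomC_ne_zero (by simpa using hz.ne')
  simp_rw [hsum, mul_eq_zero, hB, false_or]

/-- Theorem 4.10 (non-real roots): a point `z` in the upper half-plane is a root of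
some nonzero polynomial with nonnegative coefficients in the binomial coefficient
basis iff `A(0,d;z) ≥ π`. -/
theorem stmt_16 (d : ℕ) (hd : 1 ≤ d) (z : ℂ) (hz : 0 < z.im) :
    (∃ a : Fin (d + 1) → ℝ, (∀ m, 0 ≤ a m) ∧ (∃ m, a m ≠ 0) ∧
        ∑ m, (a m : ℂ) * binomC d (z + d - (m : ℕ)) = 0)
      ↔ Real.pi ≤ angleSum d 0 d z :=
  stmt_16_general d z hz
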